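/- (Proposition 3, best response of a sensor node) Under the hypotheses making the sensor utility U_L strictly concave on the open interval I (a ≥ e, g > 2 on I, w₁, w₂ ∈ (0,1) with w₁ + w₂ = 1, E_tl, E, n, d, n_srx, Q_sum > 0), suppose p* ∈ I is a critical point of U_L, i.e., U_L'(p*) = 0, and let g'(p*) > 0 be the derivative of g at p*. Then p* is the unique global maximizer of U_L on I, and it satisfies (p*)² · ( w₁·d³·E·n_srx − Z·g(p*)²·g'(p*) ) = w₂·d³·E_tl·n_srx·Q_sum, where Z = 4π·n·w₂·E_tl. -/

import Mathlib

/-- The underwater acoustic transmit-power function Q(R) = A·R^k·a^R + Q₀. -/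
noncomputable def Qfun (A a k Q₀ : ℝ) : ℝ → ℝ := fun R => A * R ^ k * a ^ R + Q₀

/-- The leader (sensor node) utility (Eq. (12)):
U_L(p) = w₁·(E_tl − E·p)/E_tl + w₂·( (4π·n/(3d³·n_srx))·g(p)³ − Q_sum/p ). -/
noncomputable def UL (w₁ w₂ Etl E n d nsrx Qsum : ℝ) (g : ℝ → ℝ) : ℝ → ℝ :=
  fun p => w₁ * (Etl - E * p) / Etl +
    w₂ * ((4 * Real.pi * n / (3 * d ^ 3 * nsrx)) * (g p) ^ 3 - Qsum / p)

/-!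
With `s = R³`, the function `g³` inverts `s ↦ Q(s^{1/3})`, whose derivative `Q'(R)/(3R²)` is
positive and, when `R > 2` and `log a ≥ 1`, increasing in `R`. So `s ↦ Q(s^{1/3})` is increasing
and strictly convex on `(8, ∞)`, and its inverse `g³` is strictly concave on `I`. Hence `U_L`
(affine, plus a positive multiple of `g³`, minus `Q_sum / p`) is strictly concave on `I`, and its
critical point is its unique maximizer. The identity is `U_L'(p*) = 0` with denominators cleared.
-/

open Set Real

theorem StrictConvexOn.strictConcaveOn_of_leftInvOn {𝕜 α β : Type*} [Semiring 𝕜] [PartialOrder 𝕜]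
    [AddCommMonoid α] [LinearOrder α] [SMul 𝕜 α] [AddCommMonoid β] [PartialOrder β] [SMul 𝕜 β]
    {S : Set α} {I : Set β} {φ : α → β} {h : β → α} (hφ : StrictConvexOn 𝕜 S φ)
    (hφ_mono : StrictMonoOn φ S) (hI : Convex 𝕜 I) (hh : MapsTo h I S) (hinv : LeftInvOn φ h I) :
    StrictConcaveOn 𝕜 I h := by
  refine ⟨hI, fun x hx y hy hxy a b ha hb hab => ?_⟩
  have hxy' : h x ≠ h y := fun e => hxy (by rw [← hinv hx, ← hinv hy, e])
  have hcomb := hI hx hy ha.le hb.le hab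
  rw [← hφ_mono.lt_iff_lt (hφ.1 (hh hx) (hh hy) ha.le hb.le hab) (hh hcomb), hinv hcomb]
  simpa only [hinv hx, hinv hy] using hφ.2 (hh hx) (hh hy) hxy' ha hb hab

theorem StrictConcaveOn.const_mul {E : Type*} [AddCommMonoid E] [SMul ℝ E] {s : Set E}
    {f : E → ℝ} {c : ℝ} (hc : 0 < c) (hf : StrictConcaveOn ℝ s f) :
    StrictConcaveOn ℝ s (fun x => c * f x) := by
  refine ⟨hf.1, fun x hx y hy hxy a b ha hb hab => ?_⟩
  have h := mul_lt_mul_of_pos_left (hf.2 hx hy hxy ha hb hab) hc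
  simp only [smul_eq_mul] at h ⊢
  linarith

theorem StrictConcaveOn.lt_of_hasDerivAt_eq_zero {S : Set ℝ} {f : ℝ → ℝ} {x y : ℝ}
    (hf : StrictConcaveOn ℝ S f) (hx : x ∈ S) (hy : y ∈ S) (hxy : y ≠ x)
    (hfx : HasDerivAt f 0 x) : f y < f x := by
  rcases hxy.lt_or_gt with hlt | hgt
  · have h := hf.lt_slope_of_hasDerivAt hy hx hlt hfx
    rw [slope_def_field, lt_div_iff₀ (sub_pos.2 hlt)] at h
    linarith
  · have h := hf.slope_lt_of_hasDerivAt hx hy hgt hfx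
    rw [slope_def_field, div_lt_iff₀ (sub_pos.2 hgt)] at h
    linarith

lemma hasDerivAt_Qfun (A k Q₀ : ℝ) {a R : ℝ} (ha : 0 < a) (hR : 0 < R) :
    HasDerivAt (Qfun A a k Q₀) (A * R ^ (k - 1) * a ^ R * (k + R * log a)) R := by
  have hpow := (hasDerivAt_rpow_const (p := k) (Or.inl hR.ne')).const_mul A
  have hexp := (hasStrictDerivAt_const_rpow ha R).hasDerivAt
  refine ((hpow.mul hexp).add_const Q₀).congr_deriv ?_
  rw [show R ^ k = R ^ (k - 1) * R by rw [← rpow_add_one hR.ne', sub_add_cancel]]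
  ring

noncomputable def QfunCube (A a k Q₀ s : ℝ) : ℝ := Qfun A a k Q₀ (s ^ (3⁻¹ : ℝ))

/-- `Q'(R) / (3 R²)`: the derivative of `QfunCube` at `s = R³`. -/
noncomputable def QfunCubeDeriv (A a k R : ℝ) : ℝ := A * R ^ (k - 3) * a ^ R * (k + R * log a) / 3

lemma QfunCube_pow_three (A a k Q₀ : ℝ) {R : ℝ} (hR : 0 ≤ R) :
    QfunCube A a k Q₀ (R ^ 3) = Qfun A a k Q₀ R := by
  rw [QfunCube, show (3⁻¹ : ℝ) = ((3 : ℕ) : ℝ)⁻¹ by norm_num,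
    pow_rpow_inv_natCast hR three_ne_zero]

lemma hasDerivAt_QfunCube (A k Q₀ : ℝ) {a s : ℝ} (ha : 0 < a) (hs : 0 < s) :
    HasDerivAt (QfunCube A a k Q₀) (QfunCubeDeriv A a k (s ^ (3⁻¹ : ℝ))) s := by
  set R := s ^ (3⁻¹ : ℝ)
  have hR : 0 < R := rpow_pos_of_pos hs _
  refine ((hasDerivAt_Qfun A k Q₀ ha hR).comp s
    (hasDerivAt_rpow_const (p := 3⁻¹) (Or.inl hs.ne'))).congr_deriv ?_
  have hs_pow : s ^ ((3 : ℝ)⁻¹ - 1) = R ^ (-2 : ℝ) := by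
    rw [← rpow_mul hs.le]; norm_num
  have hR_pow : R ^ (k - 1) * R ^ (-2 : ℝ) = R ^ (k - 3) := by
    rw [← rpow_add hR]; ring_nf
  rw [hs_pow, QfunCubeDeriv, ← hR_pow]
  ring

lemma QfunCubeDeriv_pos {A a k R : ℝ} (hA : 0 < A) (ha : 1 ≤ a) (hk : 0 < k) (hR : 0 < R) :
    0 < QfunCubeDeriv A a k R := by
  have : 0 ≤ R * log a := mul_nonneg hR.le (log_nonneg ha)
  have := rpow_pos_of_pos hR (k - 3)
  have := rpow_pos_of_pos (zero_lt_one.trans_le ha) R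
  unfold QfunCubeDeriv
  positivity

lemma strictMonoOn_QfunCubeDeriv {A a k : ℝ} (hA : 0 < A) (ha : exp 1 ≤ a) (hk : 1 ≤ k) :
    StrictMonoOn (QfunCubeDeriv A a k) (Ioi 2) := by
  have ha0 : 0 < a := (exp_pos 1).trans_le ha
  have hL : 1 ≤ log a := (le_log_iff_exp_le ha0).2 ha
  have hder : ∀ R : ℝ, 0 < R → HasDerivAt (QfunCubeDeriv A a k)
      (A * R ^ (k - 4) * a ^ R *
        ((k - 3 + R * log a) * (k + R * log a) + R * log a) / 3) R := by
    intro R hR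
    have hpow := (hasDerivAt_rpow_const (p := k - 3) (Or.inl hR.ne')).const_mul A
    have hexp := (hasStrictDerivAt_const_rpow ha0 R).hasDerivAt
    have hlin := ((hasDerivAt_id R).mul_const (log a)).const_add k
    refine (((hpow.mul hexp).mul hlin).div_const 3).congr_deriv ?_
    simp only [Pi.mul_apply, id]
    rw [show R ^ (k - 3) = R ^ (k - 4) * R by rw [← rpow_add_one hR.ne']; ring_nf,
      show k - 3 - 1 = k - 4 by ring]
    ring
  refine strictMonoOn_of_deriv_pos (convex_Ioi 2)
    (fun R hR => (hder R (zero_lt_two.trans hR)).continuousAt.continuousWithinAt) ?_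
  rw [interior_Ioi]
  intro R hR
  have hR : 2 < R := hR
  rw [(hder R (by linarith)).deriv]
  have hu : 2 < R * log a := by nlinarith
  -- the bracket is `(k - 1) (k + 2u - 2) + u² - 2` with `u = R log a`
  have : 0 < (k - 3 + R * log a) * (k + R * log a) + R * log a := by
    nlinarith [mul_nonneg (sub_nonneg.2 hk) (by linarith : 0 ≤ k + 2 * (R * log a) - 2)]
  have := rpow_pos_of_pos (by linarith : (0:ℝ) < R) (k - 4)
  have := rpow_pos_of_pos ha0 R
  positivity

lemma strictMonoOn_QfunCube {A a k : ℝ} (Q₀ : ℝ) (hA : 0 < A) (ha : 1 ≤ a) (hk : 0 < k) :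
    StrictMonoOn (QfunCube A a k Q₀) (Ioi 0) := by
  have ha0 : 0 < a := zero_lt_one.trans_le ha
  refine strictMonoOn_of_deriv_pos (convex_Ioi 0)
    (fun s hs => (hasDerivAt_QfunCube A k Q₀ ha0 hs).continuousAt.continuousWithinAt) ?_
  rw [interior_Ioi]
  intro s hs
  rw [(hasDerivAt_QfunCube A k Q₀ ha0 hs).deriv]
  exact QfunCubeDeriv_pos hA ha hk (rpow_pos_of_pos hs _)

lemma two_lt_rpow_inv_three {s : ℝ} (hs : 8 < s) : 2 < s ^ (3⁻¹ : ℝ) := by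
  rw [lt_rpow_inv_iff_of_pos zero_le_two (by linarith) three_pos]
  norm_num [hs]

lemma strictConvexOn_QfunCube {A a k : ℝ} (Q₀ : ℝ) (hA : 0 < A) (ha : exp 1 ≤ a) (hk : 1 ≤ k) :
    StrictConvexOn ℝ (Ioi 8) (QfunCube A a k Q₀) := by
  have ha0 : 0 < a := (exp_pos 1).trans_le ha
  have hpos : Ioi (8 : ℝ) ⊆ Ioi 0 := Ioi_subset_Ioi (by norm_num)
  have hderiv : EqOn (fun s => QfunCubeDeriv A a k (s ^ (3⁻¹ : ℝ))) (deriv (QfunCube A a k Q₀))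
      (Ioi 8) := fun s hs => (hasDerivAt_QfunCube A k Q₀ ha0 (hpos hs)).deriv.symm
  refine StrictMonoOn.strictConvexOn_of_deriv (convex_Ioi 8)
    (fun s hs => (hasDerivAt_QfunCube A k Q₀ ha0 (hpos hs)).continuousAt.continuousWithinAt) ?_
  rw [interior_Ioi]
  refine StrictMonoOn.congr ?_ hderiv
  exact (strictMonoOn_QfunCubeDeriv hA ha hk).comp
    ((strictMonoOn_rpow_Ici_of_exponent_pos (by norm_num)).mono (Ioi_subset_Ici (by norm_num)))
    fun s hs => two_lt_rpow_inv_three hs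

lemma strictConcaveOn_pow_three_of_leftInvOn_Qfun {A a k Q₀ : ℝ} (hA : 0 < A) (ha : exp 1 ≤ a)
    (hk : 1 ≤ k) {g : ℝ → ℝ} {I : Set ℝ} (hI : Convex ℝ I) (hgQ : LeftInvOn (Qfun A a k Q₀) g I)
    (hg : ∀ p ∈ I, 2 < g p) :
    StrictConcaveOn ℝ I (fun p => g p ^ 3) := by
  have h1a : 1 ≤ a := (one_le_exp zero_le_one).trans ha
  refine (strictConvexOn_QfunCube Q₀ hA ha hk).strictConcaveOn_of_leftInvOn
    ((strictMonoOn_QfunCube Q₀ hA h1a (by linarith)).mono (Ioi_subset_Ioi (by norm_num))) hI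
    (fun p hp => ?_) fun p hp => ?_
  · exact lt_of_eq_of_lt (by norm_num) (pow_lt_pow_left₀ (hg p hp) zero_le_two three_ne_zero)
  · rw [QfunCube_pow_three _ _ _ _ (by linarith [hg p hp]), hgQ hp]

lemma strictConcaveOn_UL {w₁ w₂ Etl E n d nsrx Qsum : ℝ} {g : ℝ → ℝ} {I : Set ℝ}
    (hw₂ : 0 < w₂) (hn : 0 < n) (hd : 0 < d) (hnsrx : 0 < nsrx) (hQsum : 0 ≤ Qsum)
    (hI : I ⊆ Ioi 0) (hg : StrictConcaveOn ℝ I (fun p => g p ^ 3)) :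
    StrictConcaveOn ℝ I (UL w₁ w₂ Etl E n d nsrx Qsum g) := by
  have hI' : Convex ℝ I := hg.1
  have h_energy : ConcaveOn ℝ I (fun p => -(w₁ * E) / Etl * p + w₁ * Etl / Etl) :=
    ((LinearMap.mulLeft ℝ (-(w₁ * E) / Etl)).concaveOn hI').add_const _
  have h_volume : StrictConcaveOn ℝ I
      (fun p => w₂ * (4 * π * n / (3 * d ^ 3 * nsrx)) * g p ^ 3) :=
    hg.const_mul (by positivity)
  have h_power : ConcaveOn ℝ I (fun p : ℝ => -((w₂ * Qsum) • p ^ (-1 : ℤ))) :=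
    (((convexOn_zpow (-1)).smul (mul_nonneg hw₂.le hQsum)).neg).subset hI hI'
  refine (h_energy.add_strictConcaveOn (h_volume.add_concaveOn h_power)).congr fun p _ => ?_
  simp only [UL, Pi.add_apply, smul_eq_mul, zpow_neg, zpow_one]
  ring

lemma hasDerivAt_UL (w₁ w₂ Etl E n d nsrx Qsum : ℝ) {g : ℝ → ℝ} {p g' : ℝ} (hp : p ≠ 0)
    (hg : HasDerivAt g g' p) :
    HasDerivAt (UL w₁ w₂ Etl E n d nsrx Qsum g)
      (-(w₁ * E) / Etl + w₂ * (4 * π * n / (3 * d ^ 3 * nsrx) * (3 * g p ^ 2 * g') +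
        Qsum / p ^ 2)) p := by
  have h_energy := ((((hasDerivAt_id p).const_mul E).const_sub Etl).const_mul w₁).div_const Etl
  have h_volume := (hg.pow 3).const_mul (4 * π * n / (3 * d ^ 3 * nsrx))
  have h_power := (hasDerivAt_const p Qsum).div (hasDerivAt_id p) hp
  refine (h_energy.add ((h_volume.sub h_power).const_mul w₂)).congr_deriv ?_
  simp only [id]
  field_simp
  ring

theorem stmt_12_general (A a k Q₀ : ℝ) (hA : 0 < A) (ha : Real.exp 1 ≤ a) (hk : 1 ≤ k) (hQ₀ : 0 ≤ Q₀)
    (g : ℝ → ℝ)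
    (hgQ : ∀ y : ℝ, Q₀ < y → Qfun A a k Q₀ (g y) = y)
    (I : Set ℝ) (hIsub : I ⊆ Set.Ioi Q₀) (hIconv : Convex ℝ I)
    (hg2 : ∀ p ∈ I, 2 < g p)
    (w₁ w₂ : ℝ) (hw₂ : w₂ ∈ Set.Ioo (0 : ℝ) 1)
    (Etl E n d nsrx Qsum : ℝ) (hEtl : 0 < Etl) (hn : 0 < n) (hd : 0 < d)
    (hnsrx : 0 < nsrx) (hQsum : 0 < Qsum)
    (pstar : ℝ) (hpI : pstar ∈ I)
    (hcrit : deriv (UL w₁ w₂ Etl E n d nsrx Qsum g) pstar = 0)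
    (g' : ℝ) (hgd : HasDerivAt g g' pstar) :
    (∀ p ∈ I, p ≠ pstar →
      UL w₁ w₂ Etl E n d nsrx Qsum g p < UL w₁ w₂ Etl E n d nsrx Qsum g pstar) ∧
    pstar ^ 2 * (w₁ * d ^ 3 * E * nsrx -
        (4 * Real.pi * n * w₂ * Etl) * (g pstar) ^ 2 * g') =
      w₂ * d ^ 3 * Etl * nsrx * Qsum := by
  have hIpos : I ⊆ Ioi 0 := fun p hp => hQ₀.trans_lt (hIsub hp)
  have hpstar : 0 < pstar := hIpos hpI
  have hcube : StrictConcaveOn ℝ I (fun p => g p ^ 3) :=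
    strictConcaveOn_pow_three_of_leftInvOn_Qfun hA ha hk hIconv (fun p hp => hgQ p (hIsub hp)) hg2
  have hconcave : StrictConcaveOn ℝ I (UL w₁ w₂ Etl E n d nsrx Qsum g) :=
    strictConcaveOn_UL hw₂.1 hn hd hnsrx hQsum.le hIpos hcube
  have hderiv := hasDerivAt_UL w₁ w₂ Etl E n d nsrx Qsum hpstar.ne' hgd
  have hcrit' := hderiv.deriv ▸ hcrit
  refine ⟨fun p hp hne => hconcave.lt_of_hasDerivAt_eq_zero hpI hp hne (hcrit' ▸ hderiv), ?_⟩
  field_simp at hcrit'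
  linear_combination -hcrit'

/-- Proposition 3, best response of a sensor node: a critical point p* ∈ I of
U_L is the unique global maximizer of U_L on I, and it satisfies
(p*)²·(w₁·d³·E·n_srx − Z·g(p*)²·g'(p*)) = w₂·d³·E_tl·n_srx·Q_sum, with Z = 4π·n·w₂·E_tl. -/
theorem stmt_12 (A a k Q₀ : ℝ) (hA : 0 < A) (ha : Real.exp 1 ≤ a) (hk : 1 ≤ k) (hQ₀ : 0 ≤ Q₀)
    (g : ℝ → ℝ)
    (hginv : ∀ R : ℝ, 0 < R → g (Qfun A a k Q₀ R) = R)
    (hgQ : ∀ y : ℝ, Q₀ < y → Qfun A a k Q₀ (g y) = y)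
    (hgmono : StrictMonoOn g (Set.Ioi Q₀))
    (hgpos : ∀ y : ℝ, Q₀ < y → 0 < g y)
    (I : Set ℝ) (hIsub : I ⊆ Set.Ioi Q₀) (hIopen : IsOpen I) (hIconv : Convex ℝ I)
    (hg2 : ∀ p ∈ I, 2 < g p)
    (w₁ w₂ : ℝ) (hw₁ : w₁ ∈ Set.Ioo (0 : ℝ) 1) (hw₂ : w₂ ∈ Set.Ioo (0 : ℝ) 1)
    (hw : w₁ + w₂ = 1)
    (Etl E n d nsrx Qsum : ℝ) (hEtl : 0 < Etl) (hE : 0 < E) (hn : 0 < n) (hd : 0 < d)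
    (hnsrx : 0 < nsrx) (hQsum : 0 < Qsum)
    (pstar : ℝ) (hpI : pstar ∈ I)
    (hcrit : deriv (UL w₁ w₂ Etl E n d nsrx Qsum g) pstar = 0)
    (g' : ℝ) (hgd : HasDerivAt g g' pstar) (hg' : 0 < g') :
    (∀ p ∈ I, p ≠ pstar →
      UL w₁ w₂ Etl E n d nsrx Qsum g p < UL w₁ w₂ Etl E n d nsrx Qsum g pstar) ∧
    pstar ^ 2 * (w₁ * d ^ 3 * E * nsrx -
        (4 * Real.pi * n * w₂ * Etl) * (g pstar) ^ 2 * g') =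
      w₂ * d ^ 3 * Etl * nsrx * Qsum :=
  stmt_12_general A a k Q₀ hA ha hk hQ₀ g hgQ I hIsub hIconv hg2 w₁ w₂ hw₂ Etl E n d nsrx Qsum hEtl
    hn hd hnsrx hQsum pstar hpI hcrit g' hgd
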